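/- Let E and U be types, f : E → U → E, X_f : Set E, κ : E → U, V : E → ℝ, and L : E → U → ℝ. Assume (A3) f x (κ x) ∈ X_f for all x ∈ X_f, 0 ≤ L x (κ x) for all x ∈ X_f, (A4) V (f x (κ x)) - V x + L x (κ x) ≤ 0 for all x ∈ X_f, and additionally 0 ≤ V x for all x ∈ X_f. Define the closed-loop trajectory x : ℕ → E by x 0 = x₀ ∈ X_f and x (k+1) = f (x k) (κ (x k)). Then the infinite series ∑_{k=0}^∞ L (x k) (κ (x k)) converges, its sum is at most V x₀, and consequently the stage costs along the closed-loop trajectory tend to zero: L (x k) (κ (x k)) → 0 as k → ∞. -/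
import Mathlib

open Filter

/-- Under (A3) positive invariance, nonnegativity of the stage cost and of the
terminal cost on the terminal set, and (A4) the Lyapunov decrease condition,
the infinite series of stage costs along the closed-loop trajectory converges,
its sum is at most `V x₀`, and the stage costs tend to zero. -/
theorem stage_costs_summable_tendsto_zero {E U : Type*}
    (f : E → U → E) (Xf : Set E) (κ : E → U) (V : E → ℝ) (L : E → U → ℝ)
    (hA3 : ∀ x ∈ Xf, f x (κ x) ∈ Xf)
    (hL : ∀ x ∈ Xf, 0 ≤ L x (κ x))
    (hA4 : ∀ x ∈ Xf, V (f x (κ x)) - V x + L x (κ x) ≤ 0)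
    (hV : ∀ x ∈ Xf, 0 ≤ V x)
    (x₀ : E) (hx₀ : x₀ ∈ Xf)
    (x : ℕ → E) (hx0 : x 0 = x₀)
    (hxs : ∀ k, x (k + 1) = f (x k) (κ (x k))) :
    (Summable fun k => L (x k) (κ (x k))) ∧
    (∑' k, L (x k) (κ (x k))) ≤ V x₀ ∧
    Tendsto (fun k => L (x k) (κ (x k))) atTop (nhds 0) := by
  have hmem : ∀ k, x k ∈ Xf := by
    intro k
    induction k with
    | zero => rw [hx0]; exact hx₀
    | succ n ih => rw [hxs]; exact hA3 _ ih
  have key : ∀ n, ∑ k ∈ Finset.range n, L (x k) (κ (x k)) ≤ V x₀ := by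
    intro n
    have h : ∀ n, ∑ k ∈ Finset.range n, L (x k) (κ (x k)) + V (x n) ≤ V x₀ := by
      intro n
      induction n with
      | zero => simp [hx0]
      | succ m ih =>
          rw [Finset.sum_range_succ]
          have := hA4 _ (hmem m)
          rw [← hxs m] at this
          linarith
    have := h n
    have := hV _ (hmem n)
    linarith
  have hsum : Summable fun k => L (x k) (κ (x k)) :=
    summable_of_sum_range_le (fun k => hL _ (hmem k)) key
  refine ⟨hsum, Summable.tsum_le_of_sum_range_le hsum key,
    hsum.tendsto_atTop_zero⟩
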